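/- Let G be a finite simple connected graph and let x ≠ y be vertices of G. As α tends to 1 from the left, the quotient κ_α(x,y)/(1−α) converges to inf { (Δf(x) − Δf(y)) / d(x,y) : f : V(G) → ℝ is 1-Lipschitz and f(y) − f(x) = d(x,y) }, where Δf(x) = (1/deg(x)) · ∑_{z adjacent to x} (f(z) − f(x)). -/

import Mathlib

open Finset

noncomputable section

/-- The (normalized) graph Laplacian `Δf(x) = (1/deg x) ∑_{y ~ x} (f y - f x)`. -/
def graphLap {V : Type*} [Fintype V] (G : SimpleGraph V) [DecidableRel G.Adj]
    (f : V → ℝ) (x : V) : ℝ :=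
  (G.degree x : ℝ)⁻¹ * ∑ y ∈ G.neighborFinset x, (f y - f x)

/-- `f` is 1-Lipschitz with respect to the graph distance. -/
def IsLip1 {V : Type*} (G : SimpleGraph V) (f : V → ℝ) : Prop :=
  ∀ u v : V, |f u - f v| ≤ G.dist u v

/-- Lin–Lu–Yau curvature of a pair of vertices, via the limit-free
(Münch–Wojciechowski) formulation. -/
def kappaLLY {V : Type*} [Fintype V] (G : SimpleGraph V) [DecidableRel G.Adj]
    (x y : V) : ℝ :=
  sInf { r : ℝ | ∃ f : V → ℝ, IsLip1 G f ∧ f y - f x = G.dist x y ∧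
      r = (graphLap G f x - graphLap G f y) / G.dist x y }

/-- `G` contains a cycle of length `n` as a subgraph: `n` distinct vertices
arranged cyclically so that consecutive ones are adjacent. -/
def HasCycleLen {V : Type*} (G : SimpleGraph V) (n : ℕ) [NeZero n] : Prop :=
  ∃ c : Fin n → V, Function.Injective c ∧ ∀ i : Fin n, G.Adj (c i) (c (i + 1))

/-- `m` is a probability distribution on the (finite) vertex set. -/
def IsProb {V : Type*} [Fintype V] (m : V → ℝ) : Prop :=
  (∀ x, 0 ≤ m x ∧ m x ≤ 1) ∧ ∑ x, m x = 1

/-- `A` is a coupling between the distributions `m1` and `m2`. -/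
def IsCoupling {V : Type*} [Fintype V] (m1 m2 : V → ℝ) (A : V → V → ℝ) : Prop :=
  (∀ x y, 0 ≤ A x y ∧ A x y ≤ 1) ∧ (∀ x, ∑ y, A x y = m1 x) ∧
    (∀ y, ∑ x, A x y = m2 y)

/-- The transportation distance between two distributions on the vertices of `G`. -/
def transportDist {V : Type*} [Fintype V] (G : SimpleGraph V) (m1 m2 : V → ℝ) : ℝ :=
  sInf { r : ℝ | ∃ A : V → V → ℝ, IsCoupling m1 m2 A ∧
      r = ∑ x, ∑ y, A x y * G.dist x y }

/-- The `α`-lazy random walk distribution at the vertex `x`. -/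
def lazyWalk {V : Type*} [Fintype V] [DecidableEq V] (G : SimpleGraph V)
    [DecidableRel G.Adj] (α : ℝ) (x : V) : V → ℝ :=
  fun v => if v = x then α else if G.Adj x v then (1 - α) / G.degree x else 0

/-- The `α`-Ricci curvature `κ_α(x,y) = 1 - W(m_x^α, m_y^α)/d(x,y)`. -/
def kappaAlpha {V : Type*} [Fintype V] [DecidableEq V] (G : SimpleGraph V)
    [DecidableRel G.Adj] (α : ℝ) (x y : V) : ℝ :=
  1 - transportDist G (lazyWalk G α x) (lazyWalk G α y) / G.dist x y


/-!
By Kantorovich duality, `W(m_x^α, m_y^α)` is the supremum over 1-Lipschitz `f` of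
`∑ f m_y^α - ∑ f m_x^α = (f y - f x) + (1 - α) (Δf y - Δf x)`. The first term is at most
`d(x, y)`, with equality exactly for the functions competing in the infimum `κ_LLY`. Weak duality
therefore already gives `κ_α ≤ (1 - α) κ_LLY`. Conversely, on the compact set of 1-Lipschitz
functions vanishing at `x`, a Danskin-type perturbation argument shows that for small
`t = 1 - α` the maximum of `(f y - f x) + t (Δf y - Δf x)` is at most
`d(x, y) - t d(x, y) κ_LLY + o(t)`, and strong duality turns this into the matching lower bound on
`κ_α`. Strong duality itself comes from separating `(m₁, m₂, B)` from the compact convex image of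
the simplex on `V × V` under `P ↦ (marginals of P, cost of P)`, followed by a `c`-transform.
-/

open Filter Topology

section LazyWalk

variable {V : Type*} [Fintype V] [DecidableEq V] {G : SimpleGraph V} [DecidableRel G.Adj]
  {x : V} {α : ℝ}

theorem sum_mul_lazyWalk (hx : G.degree x ≠ 0) (f : V → ℝ) :
    ∑ v, f v * lazyWalk G α x v = f x + (1 - α) * graphLap G f x := by
  have hsplit : ∀ v, f v * lazyWalk G α x v = (if v = x then α * f v else 0) +
      (if v ∈ G.neighborFinset x then (1 - α) / G.degree x * f v else 0) := by
    intro v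
    by_cases hvx : v = x
    · subst hvx; simp [lazyWalk, mul_comm]
    · by_cases hadj : G.Adj x v <;> simp [lazyWalk, hvx, hadj, mul_comm]
  rw [sum_congr rfl fun v _ => hsplit v, sum_add_distrib, Fintype.sum_ite_eq', sum_ite_mem,
    univ_inter, ← mul_sum, graphLap, sum_sub_distrib, sum_const,
    G.card_neighborFinset_eq_degree, nsmul_eq_mul]
  field_simp
  ring

theorem isProb_lazyWalk (hx : 0 < G.degree x) (hα₀ : 0 ≤ α) (hα₁ : α ≤ 1) :
    IsProb (lazyWalk G α x) := by
  have hdeg : (1 : ℝ) ≤ G.degree x := by exact_mod_cast hx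
  refine ⟨fun v => ?_, ?_⟩
  · unfold lazyWalk
    split_ifs
    · exact ⟨hα₀, hα₁⟩
    · exact ⟨by positivity, (div_le_one (by positivity)).2 (by linarith)⟩
    · simp
  · simpa [graphLap] using sum_mul_lazyWalk hx.ne' (α := α) fun _ => 1

end LazyWalk

section Lipschitz

variable {V : Type*} {G : SimpleGraph V} {f : V → ℝ}

theorem IsLip1.sub_le (hf : IsLip1 G f) (u v : V) : f v - f u ≤ G.dist u v :=
  (abs_sub_le_iff.1 (hf u v)).2

theorem IsLip1.sub_const (hf : IsLip1 G f) (c : ℝ) : IsLip1 G fun v => f v - c := by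
  intro u v
  simpa using hf u v

theorem SimpleGraph.Connected.isLip1_dist (hconn : G.Connected) (x : V) :
    IsLip1 G fun v => (G.dist x v : ℝ) := by
  intro u v
  have hu : (G.dist x u : ℝ) ≤ G.dist x v + G.dist u v := by
    rw [G.dist_comm (u := u)]; exact_mod_cast hconn.dist_triangle
  have hv : (G.dist x v : ℝ) ≤ G.dist x u + G.dist u v := by exact_mod_cast hconn.dist_triangle
  exact abs_sub_le_iff.2 ⟨by linarith, by linarith⟩

theorem isClosed_setOf_isLip1 : IsClosed {f : V → ℝ | IsLip1 G f} := by
  simp only [IsLip1, Set.ofPred_forall]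
  exact isClosed_iInter fun u => isClosed_iInter fun v =>
    isClosed_le ((continuous_apply u).sub (continuous_apply v)).abs continuous_const

theorem isCompact_setOf_isLip1 (x : V) : IsCompact {f : V → ℝ | f x = 0 ∧ IsLip1 G f} := by
  refine (isCompact_univ_pi fun v => isCompact_Icc (a := -(G.dist v x : ℝ)) (b := G.dist v x))
    |>.of_isClosed_subset ((isClosed_eq (continuous_apply x) continuous_const).inter
      isClosed_setOf_isLip1) ?_
  rintro f ⟨hfx, hf⟩ v -
  simpa [hfx, abs_le] using hf v x

end Lipschitz

section Laplacian

variable {V : Type*} [Fintype V] {G : SimpleGraph V} [DecidableRel G.Adj] {f : V → ℝ}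

theorem graphLap_sub_const (f : V → ℝ) (c : ℝ) (x : V) :
    graphLap G (fun v => f v - c) x = graphLap G f x := by
  simp [graphLap]

theorem continuous_graphLap (x : V) : Continuous fun f : V → ℝ => graphLap G f x :=
  continuous_const.mul <| continuous_finsetSum _ fun z _ =>
    (continuous_apply z).sub (continuous_apply x)

theorem IsLip1.abs_graphLap_le_one (hf : IsLip1 G f) (x : V) : |graphLap G f x| ≤ 1 := by
  have hsum : |∑ z ∈ G.neighborFinset x, (f z - f x)| ≤ G.degree x := by
    refine (abs_sum_le_sum_abs _ _).trans ?_
    rw [← G.card_neighborFinset_eq_degree]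
    refine (sum_le_card_nsmul _ _ 1 fun z hz => ?_).trans_eq (by simp)
    simpa [SimpleGraph.dist_eq_one_iff_adj.2 (G.mem_neighborFinset x z |>.1 hz).symm]
      using hf z x
  rcases (G.degree x).eq_zero_or_pos with hdeg | hdeg
  · simp [graphLap, hdeg]
  · rw [graphLap, abs_mul, abs_inv, Nat.abs_cast]
    exact (inv_mul_le_one₀ (by exact_mod_cast hdeg)).2 hsum

theorem kappaLLY_le (hf : IsLip1 G f) (hfxy : f y - f x = G.dist x y) :
    kappaLLY G x y ≤ (graphLap G f x - graphLap G f y) / G.dist x y := by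
  refine csInf_le ⟨-2 / G.dist x y, ?_⟩ ⟨f, hf, hfxy, rfl⟩
  rintro r ⟨g, hg, -, rfl⟩
  have hx := abs_le.1 (hg.abs_graphLap_le_one x)
  have hy := abs_le.1 (hg.abs_graphLap_le_one y)
  exact div_le_div_of_nonneg_right (by linarith) (Nat.cast_nonneg _)

theorem le_kappaLLY (hconn : G.Connected) {x y : V} {c : ℝ}
    (h : ∀ f, IsLip1 G f → f y - f x = G.dist x y →
      c ≤ (graphLap G f x - graphLap G f y) / G.dist x y) :
    c ≤ kappaLLY G x y :=
  le_csInf ⟨_, _, hconn.isLip1_dist x, by simp, rfl⟩ fun _ ⟨f, hf, hfxy, hr⟩ => hr ▸ h f hf hfxy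

end Laplacian

theorem IsCompact.eventually_add_mul_le {X : Type*} [TopologicalSpace X] {K : Set X}
    (hK : IsCompact K) {φ ψ : X → ℝ} (hφ : Continuous φ) (hψ : Continuous ψ) {M A ε : ℝ}
    (hM : ∀ g ∈ K, φ g ≤ M) (hA : ∀ g ∈ K, φ g = M → ψ g ≤ A) (hε : 0 < ε) :
    ∀ᶠ t in 𝓝[>] 0, ∀ g ∈ K, φ g + t * ψ g ≤ M + t * (A + ε) := by
  set E := K ∩ {g | A + ε ≤ ψ g}
  have hE : IsCompact E := hK.inter_right (isClosed_le continuous_const hψ)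
  -- off `E` the bound is immediate; on `E`, `φ` stays uniformly below `M`
  obtain ⟨c, hcM, hc⟩ : ∃ c < M, ∀ g ∈ E, φ g ≤ c := by
    rcases E.eq_empty_or_nonempty with hE₀ | hE₀
    · exact ⟨M - 1, by linarith, by simp [hE₀]⟩
    · obtain ⟨g₀, hg₀, hmax⟩ := hE.exists_isMaxOn hE₀ hφ.continuousOn
      refine ⟨φ g₀, (hM g₀ hg₀.1).lt_of_ne fun heq => ?_, hmax⟩
      linarith [hA g₀ hg₀.1 heq, show A + ε ≤ ψ g₀ from hg₀.2]
  obtain ⟨B, hB⟩ := hK.bddAbove_image hψ.continuousOn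
  have hsmall : ∀ᶠ t in 𝓝[>] (0 : ℝ), t * (B - (A + ε)) < M - c := by
    have : Tendsto (fun t : ℝ => t * (B - (A + ε))) (𝓝 0) (𝓝 0) := by
      simpa using (continuous_mul_const (B - (A + ε))).tendsto 0
    exact (this.mono_left nhdsWithin_le_nhds).eventually (gt_mem_nhds (sub_pos.2 hcM))
  filter_upwards [hsmall, self_mem_nhdsWithin] with t hsmall (ht : 0 < t) g hg
  by_cases hgE : A + ε ≤ ψ g
  · have hψB : ψ g ≤ B := hB ⟨g, hg, rfl⟩
    nlinarith [hc g ⟨hg, hgE⟩]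
  · nlinarith [hM g hg]

section Transport

variable {V : Type*} [Fintype V] {G : SimpleGraph V} {m₁ m₂ : V → ℝ} {f : V → ℝ}

theorem IsProb.isCoupling_mul (h₁ : IsProb m₁) (h₂ : IsProb m₂) :
    IsCoupling m₁ m₂ fun u v => m₁ u * m₂ v :=
  ⟨fun u v => ⟨mul_nonneg (h₁.1 u).1 (h₂.1 v).1, mul_le_one₀ (h₁.1 u).2 (h₂.1 v).1 (h₂.1 v).2⟩,
    fun u => by rw [← mul_sum, h₂.2, mul_one], fun v => by rw [← sum_mul, h₁.2, one_mul]⟩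

theorem IsCoupling.sum_mul_sub_le_cost {A : V → V → ℝ} (hA : IsCoupling m₁ m₂ A)
    (hf : IsLip1 G f) :
    ∑ v, f v * m₂ v - ∑ u, f u * m₁ u ≤ ∑ u, ∑ v, A u v * G.dist u v := by
  obtain ⟨hA₀, hrow, hcol⟩ := hA
  simp_rw [← hrow, ← hcol, mul_sum]
  rw [sum_comm (s := univ) (t := univ) (f := fun v u => f v * A u v), ← sum_sub_distrib]
  refine sum_le_sum fun u _ => ?_
  rw [← sum_sub_distrib]
  refine sum_le_sum fun v _ => ?_
  nlinarith [hf.sub_le u v, (hA₀ u v).1]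

theorem transportDist_le_cost {A : V → V → ℝ} (hA : IsCoupling m₁ m₂ A) :
    transportDist G m₁ m₂ ≤ ∑ u, ∑ v, A u v * G.dist u v := by
  refine csInf_le ⟨0, ?_⟩ ⟨A, hA, rfl⟩
  rintro _ ⟨B, hB, rfl⟩
  exact sum_nonneg fun u _ => sum_nonneg fun v _ => mul_nonneg (hB.1 u v).1 (Nat.cast_nonneg _)

theorem IsLip1.sum_mul_sub_le_transportDist (hf : IsLip1 G f) (h₁ : IsProb m₁)
    (h₂ : IsProb m₂) : ∑ v, f v * m₂ v - ∑ u, f u * m₁ u ≤ transportDist G m₁ m₂ := by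
  refine le_csInf ⟨_, _, h₁.isCoupling_mul h₂, rfl⟩ ?_
  rintro _ ⟨A, hA, rfl⟩
  exact hA.sum_mul_sub_le_cost hf

theorem SimpleGraph.Connected.exists_isLip1_between (hconn : G.Connected) {a b : V → ℝ}
    (hab : ∀ u v, a u + b v ≤ G.dist u v) :
    ∃ F : V → ℝ, IsLip1 G F ∧ (∀ v, b v ≤ F v) ∧ ∀ u, F u ≤ -a u := by
  set F : V → ℝ := fun v => ⨅ u, ((G.dist u v : ℝ) - a u)
  have hF_le : ∀ u v, F v ≤ G.dist u v - a u := fun u v => ciInf_le (Finite.bddBelow_range _) u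
  have hF_sub : ∀ v w, F w - F v ≤ G.dist v w := by
    intro v w
    have : Nonempty V := ⟨v⟩
    obtain ⟨u, hu⟩ := exists_eq_ciInf_of_finite (f := fun u => (G.dist u v : ℝ) - a u)
    have htri : (G.dist u w : ℝ) ≤ G.dist u v + G.dist v w := by
      exact_mod_cast hconn.dist_triangle
    have := hF_le u w
    change _ = F v at hu
    linarith
  refine ⟨F, fun v w => abs_sub_le_iff.2 ⟨?_, hF_sub v w⟩, fun v => ?_, fun u => ?_⟩
  · simpa [G.dist_comm] using hF_sub w v
  · have : Nonempty V := ⟨v⟩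
    exact le_ciInf fun u => by linarith [hab u v]
  · simpa using hF_le u u

end Transport

section Duality

variable {V : Type*} [Fintype V] {G : SimpleGraph V} {m₁ m₂ : V → ℝ}

variable (G) in
def marginalsCost : (V × V → ℝ) →ₗ[ℝ] (V → ℝ) × (V → ℝ) × ℝ where
  toFun P := (fun u => ∑ v, P (u, v), fun v => ∑ u, P (u, v), ∑ p, P p * G.dist p.1 p.2)
  map_add' P Q := by ext <;> simp [sum_add_distrib, add_mul]
  map_smul' c P := by ext <;> simp [mul_sum, mul_assoc]

theorem transportDist_le_of_marginalsCost_eq {P : V × V → ℝ}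
    (hP : P ∈ stdSimplex ℝ (V × V)) {r : ℝ} (hPr : marginalsCost G P = (m₁, m₂, r)) :
    transportDist G m₁ m₂ ≤ r := by
  simp only [marginalsCost, LinearMap.coe_mk, AddHom.coe_mk, Prod.mk.injEq] at hPr
  obtain ⟨hrow, hcol, hcost⟩ := hPr
  have hA : IsCoupling m₁ m₂ fun u v => P (u, v) :=
    ⟨fun u v => mem_Icc_of_mem_stdSimplex hP (u, v), fun u => congrFun hrow u,
      fun v => congrFun hcol v⟩
  simpa [← hcost, Fintype.sum_prod_type] using transportDist_le_cost hA

variable (G) in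
theorem IsProb.exists_marginalsCost_eq (h₁ : IsProb m₁) (h₂ : IsProb m₂) :
    ∃ P ∈ stdSimplex ℝ (V × V), ∃ r, marginalsCost G P = (m₁, m₂, r) := by
  refine ⟨fun p => m₁ p.1 * m₂ p.2, ⟨fun p => mul_nonneg (h₁.1 _).1 (h₂.1 _).1, ?_⟩,
    ∑ p : V × V, m₁ p.1 * m₂ p.2 * G.dist p.1 p.2, ?_⟩
  · rw [Fintype.sum_prod_type, ← sum_mul_sum, h₁.2, h₂.2, mul_one]
  · simp [marginalsCost, ← mul_sum, ← sum_mul, h₁.2, h₂.2]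

variable [DecidableEq V]

theorem strongDual_apply_prod (ℓ : StrongDual ℝ ((V → ℝ) × (V → ℝ) × ℝ)) (a b : V → ℝ) (s : ℝ) :
    ℓ (a, b, s) = ∑ u, a u * ℓ (Pi.single u 1, 0, 0) + ∑ v, b v * ℓ (0, Pi.single v 1, 0) +
      s * ℓ (0, 0, 1) := by
  have : (a, b, s) = ∑ u, a u • ((Pi.single u 1 : V → ℝ), (0 : V → ℝ), (0 : ℝ)) +
      ∑ v, b v • ((0 : V → ℝ), (Pi.single v 1 : V → ℝ), (0 : ℝ)) +
      s • ((0 : V → ℝ), (0 : V → ℝ), (1 : ℝ)) := by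
    ext <;> simp [Prod.fst_sum, Prod.snd_sum, Finset.sum_apply, Pi.single_apply]
  simp only [this, map_add, map_sum, map_smul, smul_eq_mul]

theorem exists_potentials_of_lt_transportDist (h₁ : IsProb m₁) (h₂ : IsProb m₂) {B : ℝ}
    (hBW : B < transportDist G m₁ m₂) :
    ∃ a b : V → ℝ, (∀ u v, a u + b v ≤ G.dist u v) ∧
      B < ∑ u, a u * m₁ u + ∑ v, b v * m₂ v := by
  set S := marginalsCost G '' stdSimplex ℝ (V × V)
  have hS : IsCompact S :=
    (isCompact_stdSimplex ℝ _).image (marginalsCost G).continuous_of_finiteDimensional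
  have hzS : (m₁, m₂, B) ∉ S := fun ⟨P, hP, hPz⟩ =>
    hBW.not_ge (transportDist_le_of_marginalsCost_eq hP hPz)
  obtain ⟨ℓ, c, hℓS, hℓz⟩ :=
    geometric_hahn_banach_closed_point ((convex_stdSimplex ℝ _).linear_image _) hS.isClosed hzS
  set φ : V → ℝ := fun u => ℓ (Pi.single u 1, 0, 0)
  set ψ : V → ℝ := fun v => ℓ (0, Pi.single v 1, 0)
  set τ := ℓ (0, 0, 1)
  have hgen : ∀ u v, φ u + ψ v + G.dist u v * τ < c := fun u v => by
    have := hℓS _ ⟨_, single_mem_stdSimplex ℝ (u, v), rfl⟩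
    rw [strongDual_apply_prod] at this
    simpa [marginalsCost, Pi.single_apply, Prod.ext_iff, ite_and, Fintype.sum_prod_type] using this
  rw [strongDual_apply_prod] at hℓz
  -- the product coupling lies in `S` and costs more than `B`
  have hτ : τ < 0 := by
    obtain ⟨P, hP, r, hPr⟩ := h₁.exists_marginalsCost_eq G h₂
    have hrB : B < r := hBW.trans_le (transportDist_le_of_marginalsCost_eq hP hPr)
    have := hℓS _ ⟨P, hP, hPr⟩
    rw [strongDual_apply_prod] at this
    nlinarith
  set θ := -τ
  have hθ : 0 < θ := neg_pos.2 hτ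
  refine ⟨fun u => (φ u - c) / θ, fun v => ψ v / θ, fun u v => ?_, ?_⟩
  · rw [← add_div, div_le_iff₀ hθ]
    linarith [hgen u v]
  · simp only [div_mul_eq_mul_div, ← sum_div, sub_mul, sum_sub_distrib, ← mul_sum, h₁.2]
    rw [← add_div, lt_div_iff₀ hθ]
    simp only [mul_comm (m₁ _), mul_comm (m₂ _)] at hℓz ⊢
    linarith

theorem SimpleGraph.Connected.transportDist_le_of_forall_isLip1 (hconn : G.Connected)
    (h₁ : IsProb m₁) (h₂ : IsProb m₂) {B : ℝ}
    (hB : ∀ f, IsLip1 G f → ∑ v, f v * m₂ v - ∑ u, f u * m₁ u ≤ B) :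
    transportDist G m₁ m₂ ≤ B := by
  by_contra! hBW
  obtain ⟨a, b, hab, hBab⟩ := exists_potentials_of_lt_transportDist h₁ h₂ hBW
  obtain ⟨F, hF, hbF, hFa⟩ := hconn.exists_isLip1_between hab
  have hm₁ : ∑ u, a u * m₁ u ≤ -∑ u, F u * m₁ u := by
    rw [← sum_neg_distrib]
    exact sum_le_sum fun u _ => by nlinarith [hFa u, (h₁.1 u).1]
  have hm₂ : ∑ v, b v * m₂ v ≤ ∑ v, F v * m₂ v :=
    sum_le_sum fun v _ => mul_le_mul_of_nonneg_right (hbF v) (h₂.1 v).1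
  linarith [hB F hF]

end Duality

section Curvature

variable {V : Type*} [Fintype V] [DecidableEq V] {G : SimpleGraph V} [DecidableRel G.Adj]
  {x y : V}

theorem kappaAlpha_div_le_kappaLLY (hconn : G.Connected) (hxy : x ≠ y) {α : ℝ} (hα₀ : 0 ≤ α)
    (hα₁ : α < 1) : kappaAlpha G α x y / (1 - α) ≤ kappaLLY G x y := by
  have : Nontrivial V := ⟨⟨x, y, hxy⟩⟩
  have hx := hconn.preconnected.degree_pos_of_nontrivial x
  have hy := hconn.preconnected.degree_pos_of_nontrivial y
  have hd : (0 : ℝ) < G.dist x y := by exact_mod_cast hconn.pos_dist_of_ne hxy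
  refine le_kappaLLY hconn fun f hf hfxy => ?_
  have hW := hf.sum_mul_sub_le_transportDist (isProb_lazyWalk hx hα₀ hα₁.le)
    (isProb_lazyWalk hy hα₀ hα₁.le)
  rw [sum_mul_lazyWalk hy.ne', sum_mul_lazyWalk hx.ne'] at hW
  rw [div_le_iff₀ (sub_pos.2 hα₁), kappaAlpha, one_sub_div hd.ne', div_mul_eq_mul_div]
  exact div_le_div_of_nonneg_right (by linarith) hd.le

theorem eventually_kappaLLY_sub_le_kappaAlpha_div (hconn : G.Connected) (hxy : x ≠ y) {ε : ℝ}
    (hε : 0 < ε) : ∀ᶠ α in 𝓝[<] 1, kappaLLY G x y - ε ≤ kappaAlpha G α x y / (1 - α) := by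
  have : Nontrivial V := ⟨⟨x, y, hxy⟩⟩
  have hx := hconn.preconnected.degree_pos_of_nontrivial x
  have hy := hconn.preconnected.degree_pos_of_nontrivial y
  have hd : (0 : ℝ) < G.dist x y := by exact_mod_cast hconn.pos_dist_of_ne hxy
  set L := kappaLLY G x y
  have hmax := (isCompact_setOf_isLip1 (G := G) x).eventually_add_mul_le
    (φ := fun f => f y - f x) (ψ := fun f => graphLap G f y - graphLap G f x) (M := G.dist x y)
    (A := -(L * G.dist x y)) (by fun_prop) ((continuous_graphLap y).sub (continuous_graphLap x))
    (fun f hf => hf.2.sub_le x y)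
    (fun f hf hfxy => by linarith [(le_div_iff₀ hd).1 (kappaLLY_le hf.2 hfxy)]) (mul_pos hε hd)
  have hα : Tendsto (fun α : ℝ => 1 - α) (𝓝[<] 1) (𝓝[>] 0) :=
    tendsto_nhdsWithin_of_tendsto_nhds_of_eventually_within _
      (((continuous_const.sub continuous_id).tendsto' 1 0 (sub_self 1)).mono_left
        nhdsWithin_le_nhds)
      (eventually_nhdsWithin_of_forall fun α (hα : α < 1) => sub_pos.2 hα)
  filter_upwards [hα.eventually hmax, Ioo_mem_nhdsLT one_pos] with α hmax ⟨hα₀, hα₁⟩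
  have hW : transportDist G (lazyWalk G α x) (lazyWalk G α y) ≤
      G.dist x y + (1 - α) * (-(L * G.dist x y) + ε * G.dist x y) := by
    refine hconn.transportDist_le_of_forall_isLip1 (isProb_lazyWalk hx hα₀.le hα₁.le)
      (isProb_lazyWalk hy hα₀.le hα₁.le) fun f hf => ?_
    rw [sum_mul_lazyWalk hy.ne', sum_mul_lazyWalk hx.ne']
    have := hmax (fun v => f v - f x) ⟨sub_self _, hf.sub_const _⟩
    simp only [graphLap_sub_const, sub_sub_sub_cancel_right] at this
    linarith
  rw [le_div_iff₀ (sub_pos.2 hα₁), kappaAlpha, le_sub_comm, div_le_iff₀ hd]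
  linarith

end Curvature

theorem kappaAlpha_tendsto_LLY {V : Type*} [Fintype V] [DecidableEq V]
    (G : SimpleGraph V) [DecidableRel G.Adj] (hconn : G.Connected)
    (x y : V) (hxy : x ≠ y) :
    Filter.Tendsto (fun α : ℝ => kappaAlpha G α x y / (1 - α))
      (nhdsWithin 1 (Set.Ico (0 : ℝ) 1))
      (nhds (sInf { r : ℝ | ∃ f : V → ℝ, IsLip1 G f ∧ f y - f x = G.dist x y ∧
        r = (graphLap G f x - graphLap G f y) / G.dist x y })) := by
  change Tendsto _ _ (𝓝 (kappaLLY G x y))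
  refine tendsto_order.2 ⟨fun a ha => ?_, fun b hb => ?_⟩
  · filter_upwards [nhdsWithin_mono _ Set.Ico_subset_Iio_self
      (eventually_kappaLLY_sub_le_kappaAlpha_div hconn hxy (half_pos (sub_pos.2 ha)))] with α hα
    linarith
  · filter_upwards [self_mem_nhdsWithin] with α ⟨hα₀, hα₁⟩
    exact (kappaAlpha_div_le_kappaLLY hconn hxy hα₀ hα₁).trans_lt hb
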